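/- arXiv:2004.08980 — 4 statements merged into one kernel-verified Lean document; each statement's English description precedes it below -/
import Mathlib

section
/- The set {n ∈ ℕ : there exists a finite group G of odd order with nim(GEN(G)) = n} equals {0,1,2}. -/
/-!
In a group of odd order every subgroup has odd order, so from a position `P` of even size the
player to move can always play inside `⟨P⟩` without changing it. Using this waiting move,
induction on the unplayed elements shows that the nim-value of a non-generating position depends
only on the parity of `|P|` and on whether one or two more elements suffice to generate `G`
(`gameNimClosedForm`): for `|P|` odd it is `1` or `0`, for `|P|` even it is `2` or `1`. The
trivial group, `C₃` and `C₃³` realise the values `0`, `2` and `1`.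
-/

/-- The minimum excludant of a set of natural numbers. -/
noncomputable def mex (S : Set ℕ) : ℕ := sInf {n : ℕ | n ∉ S}

open Classical in
/-- The nim-value of a position in the achievement game GEN(G): a position `P`
is terminal when it generates `G` (so its nim-value is `mex ∅ = 0`); otherwise
its options are the sets `insert g P` for `g ∉ P`. -/
noncomputable def gameNim {G : Type*} [Group G] [Fintype G] (P : Finset G) : ℕ :=
  if Subgroup.closure (P : Set G) = ⊤ then 0
  else mex {n : ℕ | ∃ g : {g : G // g ∉ P}, gameNim (insert g.1 P) = n}
termination_by Pᶜ.card
decreasing_by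
  exact Finset.card_lt_card (by
    constructor
    · intro x hx
      simp only [Finset.mem_compl, Finset.mem_insert] at hx ⊢
      exact fun h => hx (Or.inr h)
    · intro hsub
      have h1 : g.1 ∈ Pᶜ := Finset.mem_compl.mpr g.2
      have h2 : g.1 ∈ (insert g.1 P)ᶜ := hsub h1
      simp at h2)

lemma mex_eq_of_notMem_of_forall_lt_mem {S : Set ℕ} {k : ℕ} (hk : k ∉ S)
    (h : ∀ m < k, m ∈ S) : mex S = k :=
  le_antisymm (Nat.sInf_le hk) (le_csInf ⟨k, hk⟩ fun _ hn ↦ not_lt.1 fun hlt ↦ hn (h _ hlt))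

namespace Subgroup

variable {G : Type*} [Group G]

def ReachesTopIn (H : Subgroup G) : ℕ → Prop
  | 0 => H = ⊤
  | n + 1 => ∃ g, (H ⊔ zpowers g).ReachesTopIn n

lemma reachesTopIn_zero {H : Subgroup G} : H.ReachesTopIn 0 ↔ H = ⊤ := Iff.rfl

lemma reachesTopIn_one {H : Subgroup G} : H.ReachesTopIn 1 ↔ ∃ g, H ⊔ zpowers g = ⊤ :=
  Iff.rfl

lemma ReachesTopIn.mono {H K : Subgroup G} (hHK : H ≤ K) {n : ℕ} (h : H.ReachesTopIn n) :
    K.ReachesTopIn n := by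
  induction n generalizing H K with
  | zero => exact top_unique (h ▸ hHK)
  | succ n ih =>
    obtain ⟨g, hg⟩ := h
    exact ⟨g, ih (sup_le_sup_right hHK _) hg⟩

lemma ReachesTopIn.succ {H : Subgroup G} {n : ℕ} (h : H.ReachesTopIn n) :
    H.ReachesTopIn (n + 1) :=
  ⟨1, by rwa [zpowers_one_eq_bot, sup_bot_eq]⟩

lemma card_sup_le_of_normal (N H : Subgroup G) [N.Normal] :
    Nat.card ↥(N ⊔ H) ≤ Nat.card N * Nat.card H := by
  have := Set.natCard_mul_le (s := (N : Set G)) (t := H)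
  rwa [← normal_mul] at this

lemma ReachesTopIn.card_le {G : Type*} [CommGroup G] [Finite G] {H : Subgroup G} {n : ℕ}
    (h : H.ReachesTopIn n) : Nat.card G ≤ Nat.card H * Monoid.exponent G ^ n := by
  induction n generalizing H with
  | zero => simp [reachesTopIn_zero.1 h]
  | succ n ih =>
    obtain ⟨g, hg⟩ := h
    calc Nat.card G ≤ Nat.card ↥(H ⊔ zpowers g) * Monoid.exponent G ^ n := ih hg
      _ ≤ Nat.card H * orderOf g * Monoid.exponent G ^ n := by
        gcongr
        rw [← Nat.card_zpowers]
        exact card_sup_le_of_normal H _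
      _ ≤ Nat.card H * Monoid.exponent G ^ (n + 1) := by
        rw [pow_succ, mul_comm (Monoid.exponent G ^ n), ← mul_assoc]
        gcongr
        exact Monoid.orderOf_le_exponent .of_finite g

lemma closure_finset_insert [DecidableEq G] (P : Finset G) (g : G) :
    closure ((insert g P : Finset G) : Set G) = closure (P : Set G) ⊔ zpowers g := by
  rw [Finset.coe_insert, Set.insert_eq, closure_union, zpowers_eq_closure, sup_comm]

lemma ReachesTopIn.notMem_of_sup_zpowers {P : Finset G} {g : G} {n : ℕ}
    (h : (closure (P : Set G) ⊔ zpowers g).ReachesTopIn n)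
    (hP : ¬ (closure (P : Set G)).ReachesTopIn n) : g ∉ P := fun hg ↦
  hP (by rwa [sup_eq_left.2 (zpowers_le.2 (subset_closure hg))] at h)

end Subgroup

open Subgroup

variable {G : Type*} [Group G]

lemma exists_mem_closure_notMem_of_even_card (hG : Odd (Nat.card G)) {P : Finset G}
    (hP : Even P.card) : ∃ g ∈ closure (P : Set G), g ∉ P := by
  by_contra! h
  have hclosure : (closure (P : Set G) : Set G) = P := subset_closure.antisymm' h
  have hcard : Nat.card (closure (P : Set G)) = P.card := by
    rw [← SetLike.coe_sort_coe, hclosure, Nat.card_coe_set_eq, Set.ncard_coe_finset]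
  exact Nat.not_even_iff_odd.2 (hG.of_dvd_nat (card_subgroup_dvd_card _)) (hcard ▸ hP)

open Classical in
noncomputable def gameNimClosedForm (P : Finset G) : ℕ :=
  if closure (P : Set G) = ⊤ then 0
  else if Even P.card then (if (closure (P : Set G)).ReachesTopIn 2 then 2 else 1)
  else if (closure (P : Set G)).ReachesTopIn 1 then 1 else 0

open Classical in
lemma gameNimClosedForm_insert {P : Finset G} {g : G} (hg : g ∉ P) :
    gameNimClosedForm (insert g P) =
      if closure (P : Set G) ⊔ zpowers g = ⊤ then 0
      else if Even P.card then (if (closure (P : Set G) ⊔ zpowers g).ReachesTopIn 1 then 1 else 0)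
      else if (closure (P : Set G) ⊔ zpowers g).ReachesTopIn 2 then 2 else 1 := by
  simp only [gameNimClosedForm, closure_finset_insert, Finset.card_insert_of_notMem hg,
    Nat.even_add_one]
  by_cases hP : Even P.card <;> simp [hP]

lemma gameNimClosedForm_le_two (P : Finset G) : gameNimClosedForm P ≤ 2 := by
  unfold gameNimClosedForm
  split_ifs <;> omega

open Classical in
lemma exists_gameNimClosedForm_insert_eq_zero {P : Finset G} (hP : closure (P : Set G) ≠ ⊤)
    (h1 : (closure (P : Set G)).ReachesTopIn 1) :
    ∃ g ∉ P, gameNimClosedForm (insert g P) = 0 := by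
  obtain ⟨g, hg⟩ := h1
  have hgP := hg.notMem_of_sup_zpowers hP
  exact ⟨g, hgP, by rw [gameNimClosedForm_insert hgP, if_pos (reachesTopIn_zero.1 hg)]⟩

open Classical in
lemma mex_gameNimClosedForm_insert_of_odd_card {P : Finset G}
    (hP : closure (P : Set G) ≠ ⊤) (hodd : ¬ Even P.card) :
    mex {n | ∃ g ∉ P, gameNimClosedForm (insert g P) = n} =
      if (closure (P : Set G)).ReachesTopIn 1 then 1 else 0 := by
  split_ifs with h1
  · refine mex_eq_of_notMem_of_forall_lt_mem ?_ ?_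
    · rintro ⟨g, hg, hval⟩
      rw [gameNimClosedForm_insert hg, if_neg hodd, if_pos (h1.mono le_sup_left).succ] at hval
      split_ifs at hval
      omega
    · intro m hm
      obtain rfl : m = 0 := by omega
      exact exists_gameNimClosedForm_insert_eq_zero hP h1
  · refine mex_eq_of_notMem_of_forall_lt_mem ?_ (by omega)
    rintro ⟨g, hg, hval⟩
    rw [gameNimClosedForm_insert hg, if_neg fun h ↦ h1 (reachesTopIn_one.2 ⟨g, h⟩),
      if_neg hodd] at hval
    split_ifs at hval

open Classical in
lemma mex_gameNimClosedForm_insert_of_even_card (hG : Odd (Nat.card G)) {P : Finset G}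
    (hP : closure (P : Set G) ≠ ⊤) (heven : Even P.card) :
    mex {n | ∃ g ∉ P, gameNimClosedForm (insert g P) = n} =
      if (closure (P : Set G)).ReachesTopIn 2 then 2 else 1 := by
  set H := closure (P : Set G)
  set S := {n | ∃ g ∉ P, gameNimClosedForm (insert g P) = n}
  obtain ⟨w, hwH, hwP⟩ := exists_mem_closure_notMem_of_even_card hG heven
  have hw : gameNimClosedForm (insert w P) = if H.ReachesTopIn 1 then 1 else 0 := by
    rw [gameNimClosedForm_insert hwP, sup_eq_left.2 (zpowers_le.2 hwH), if_neg hP, if_pos heven]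
  have h0 : 0 ∈ S := by
    by_cases h1 : H.ReachesTopIn 1
    · exact exists_gameNimClosedForm_insert_eq_zero hP h1
    · exact ⟨w, hwP, by rw [hw, if_neg h1]⟩
  have h1_iff : 1 ∈ S ↔ H.ReachesTopIn 2 := by
    constructor
    · rintro ⟨g, hg, hval⟩
      rw [gameNimClosedForm_insert hg, if_pos heven] at hval
      split_ifs at hval with _ hg1
      exact ⟨g, hg1⟩
    · intro h2
      by_cases h1 : H.ReachesTopIn 1
      · exact ⟨w, hwP, by rw [hw, if_pos h1]⟩
      · obtain ⟨g, hg⟩ := h2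
        have hgP := hg.notMem_of_sup_zpowers h1
        refine ⟨g, hgP, ?_⟩
        rw [gameNimClosedForm_insert hgP, if_neg fun h ↦ h1 (reachesTopIn_one.2 ⟨g, h⟩),
          if_pos heven, if_pos hg]
  have h2 : 2 ∉ S := by
    rintro ⟨g, hg, hval⟩
    rw [gameNimClosedForm_insert hg, if_pos heven] at hval
    split_ifs at hval
    omega
  split_ifs with hH2
  · exact mex_eq_of_notMem_of_forall_lt_mem h2 fun m hm ↦ by
      interval_cases m
      exacts [h0, h1_iff.2 hH2]
  · exact mex_eq_of_notMem_of_forall_lt_mem (mt h1_iff.1 hH2) fun m hm ↦ by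
      interval_cases m
      exact h0

open Classical in
lemma mex_gameNimClosedForm_insert (hG : Odd (Nat.card G)) {P : Finset G}
    (hP : closure (P : Set G) ≠ ⊤) :
    mex {n | ∃ g ∉ P, gameNimClosedForm (insert g P) = n} = gameNimClosedForm P := by
  rw [gameNimClosedForm, if_neg hP]
  by_cases heven : Even P.card
  · rw [mex_gameNimClosedForm_insert_of_even_card hG hP heven, if_pos heven]
  · rw [mex_gameNimClosedForm_insert_of_odd_card hP heven, if_neg heven]

theorem gameNim_eq_gameNimClosedForm [Fintype G] (hG : Odd (Fintype.card G)) (P : Finset G) :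
    gameNim P = gameNimClosedForm P := by
  rw [← Nat.card_eq_fintype_card] at hG
  induction P using gameNim.induct with
  | case1 P hP => rw [gameNim, if_pos hP, gameNimClosedForm, if_pos hP]
  | case2 P hP ih =>
    classical
    rw [gameNim, if_neg hP, ← mex_gameNimClosedForm_insert hG hP]
    congr 1
    ext n
    simp only [Subtype.exists, exists_prop, ih]

lemma gameNimClosedForm_empty_of_isCyclic [IsCyclic G] [Nontrivial G] :
    gameNimClosedForm (∅ : Finset G) = 2 := by
  obtain ⟨g, hg⟩ := IsCyclic.exists_generator (α := G)
  have h1 : (⊥ : Subgroup G).ReachesTopIn 1 :=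
    ⟨g, reachesTopIn_zero.2 (by rw [bot_sup_eq, eq_top_iff']; exact hg)⟩
  simp [gameNimClosedForm, h1.succ]

lemma gameNimClosedForm_empty_of_exponent_sq_lt_card {G : Type*} [CommGroup G] [Finite G]
    (hG : Monoid.exponent G ^ 2 < Nat.card G) : gameNimClosedForm (∅ : Finset G) = 1 := by
  have h2 : ¬ (⊥ : Subgroup G).ReachesTopIn 2 := fun h ↦ by
    simpa using hG.trans_le h.card_le
  have hbot : (⊥ : Subgroup G) ≠ ⊤ := fun h ↦ h2 (reachesTopIn_zero.2 h).succ.succ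
  simp [gameNimClosedForm, h2, hbot]

lemma gameNim_empty_multiplicative_zmod_three :
    gameNim (∅ : Finset (Multiplicative (ZMod 3))) = 2 := by
  rw [gameNim_eq_gameNimClosedForm (by simp [Nat.odd_iff]), gameNimClosedForm_empty_of_isCyclic]

lemma card_multiplicative_zmod_three_cube :
    Fintype.card (Multiplicative (ZMod 3 × ZMod 3 × ZMod 3)) = 27 := by
  simp

lemma gameNim_empty_multiplicative_zmod_three_cube :
    gameNim (∅ : Finset (Multiplicative (ZMod 3 × ZMod 3 × ZMod 3))) = 1 := by
  have hexp : Monoid.exponent (Multiplicative (ZMod 3 × ZMod 3 × ZMod 3)) ≤ 3 :=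
    Nat.le_of_dvd three_pos (Monoid.exponent_dvd_of_forall_pow_eq_one (by decide))
  rw [gameNim_eq_gameNimClosedForm (by rw [card_multiplicative_zmod_three_cube]; decide),
    gameNimClosedForm_empty_of_exponent_sq_lt_card]
  rw [Nat.card_eq_fintype_card, card_multiplicative_zmod_three_cube]
  exact (Nat.pow_le_pow_left hexp 2).trans_lt (by norm_num)

/-- The spectrum of nim-values of GEN(G) over finite groups G of odd order is
`{0,1,2}`. -/
theorem spectrum_of_nim_values_GEN_odd :
    {n : ℕ | ∃ (G : Type) (_ : Group G) (_ : Fintype G),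
      Odd (Fintype.card G) ∧ gameNim (∅ : Finset G) = n} = {0, 1, 2} := by
  ext n
  constructor
  · rintro ⟨G, _, _, hG, rfl⟩
    have := gameNimClosedForm_le_two (∅ : Finset G)
    rw [gameNim_eq_gameNimClosedForm hG]
    simp only [Set.mem_insert_iff, Set.mem_singleton_iff]
    omega
  · rintro (rfl | rfl | rfl)
    · exact ⟨Unit, _, _, by simp, by rw [gameNim, if_pos (Subsingleton.elim _ _)]⟩
    · exact ⟨_, _, _, by rw [card_multiplicative_zmod_three_cube]; decide,
        gameNim_empty_multiplicative_zmod_three_cube⟩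
    · exact ⟨_, _, _, by simp [Nat.odd_iff], gameNim_empty_multiplicative_zmod_three⟩
end

section
/- Let G be a finite group, let I be a structure subgroup with I ≠ G, and let O denote the set of structure subgroups J that are options of X_I. Define O_T := {nim(Q) : Q a position with |Q| odd and ⌈Q⌉ ∈ O} and E_T := {nim(Q) : Q a position with |Q| even and ⌈Q⌉ ∈ O}. If |I| is even, then every position P with ⌈P⌉ = I and |P| even satisfies nim(P) = mex(O_T), and every position P with ⌈P⌉ = I and |P| odd satisfies nim(P) = mex(E_T ∪ {mex(O_T)}). If |I| is odd, then every position P with ⌈P⌉ = I and |P| odd satisfies nim(P) = mex(E_T), and every position P with ⌈P⌉ = I and |P| even satisfies nim(P) = mex(O_T ∪ {mex(E_T)}). -/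
/-- ⌈P⌉: the intersection of all maximal subgroups of `G` containing `P`
(equal to `G`, i.e. `⊤`, if no maximal subgroup contains `P`). -/
def ceilSet {G : Type*} [Group G] (P : Set G) : Subgroup G :=
  sInf {M : Subgroup G | IsCoatom M ∧ P ⊆ (M : Set G)}

/-- The deficiency of a subset `S` of a finite group `G`: the minimum size of a
subset `Q` of `G` such that `S ∪ Q` generates `G`. -/
noncomputable def deficiency {G : Type*} [Group G] [Fintype G] (S : Set G) : ℕ :=
  sInf {n : ℕ | ∃ Q : Finset G, Q.card = n ∧ Subgroup.closure (S ∪ (Q : Set G)) = ⊤}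

/-- The structure class `X_J` is an option of the structure class `X_I`. -/
def IsStructOption {G : Type*} [Group G] (I J : Subgroup G) : Prop :=
  ∃ g ∉ I, ceilSet ((I : Set G) ∪ {g}) = J

/-!
Within a structure class `X_I` the nim-value of a position depends only on the parity of its
size, by well-founded induction downwards over the structure subgroups. From `P ∈ X_I`, a move
to `g ∈ I` stays in `X_I`, while a move to `g ∉ I` lands in the option class `⌈I ∪ {g}⌉`; as the
values there depend only on parity, these moves realise exactly the values in the option classes
of the parity opposite to `|P|`. The position `P = I` has only moves of the second kind, which
gives the value `v` for the parity of `|I|`. A smaller position of that parity also has a move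
to the other parity, whose value `mex (T ∪ {v})` differs from `v`, so the `mex` is still `v`.
-/

section Mex

lemma mex_notMem {S : Set ℕ} (hS : S.Finite) : mex S ∉ S :=
  Nat.sInf_mem hS.exists_notMem

lemma mex_insert_of_ne {S : Set ℕ} {b : ℕ} (hS : S.Finite) (hb : b ≠ mex S) :
    mex (insert b S) = mex S := by
  have hins : (insert b S).Finite := hS.insert b
  refine le_antisymm (Nat.sInf_le ?_) (Nat.sInf_le fun h => mex_notMem hins (Or.inr h))
  simpa [eq_comm] using ⟨hb, mex_notMem hS⟩

lemma mex_insert_mex_insert_mex {A B : Set ℕ} (hA : A.Finite) (hB : B.Finite) :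
    mex (insert (mex (insert (mex A) B)) A) = mex A :=
  mex_insert_of_ne hA fun h => mex_notMem (hB.insert _) (by rw [h]; exact Set.mem_insert _ _)

end Mex

section CeilSet

variable {G : Type*} [Group G]

lemma subset_ceilSet (P : Set G) : P ⊆ ceilSet P := fun _ hx =>
  Subgroup.mem_sInf.mpr fun _ hM => hM.2 hx

lemma subset_iff_ceilSet_le {P : Set G} {M : Subgroup G} (hM : IsCoatom M) :
    P ⊆ M ↔ ceilSet P ≤ M :=
  ⟨fun h => sInf_le ⟨hM, h⟩, fun h => (subset_ceilSet P).trans h⟩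

lemma ceilSet_congr {P Q : Set G} (h : ∀ M : Subgroup G, IsCoatom M → (P ⊆ M ↔ Q ⊆ M)) :
    ceilSet P = ceilSet Q := by
  unfold ceilSet
  congr 1
  ext M
  exact and_congr_right (h M)

lemma ceilSet_insert_ceilSet (P : Set G) (g : G) :
    ceilSet (insert g (ceilSet P : Set G)) = ceilSet (insert g P) :=
  ceilSet_congr fun _ hM => by
    rw [Set.insert_subset_iff, Set.insert_subset_iff, SetLike.coe_subset_coe,
      ← subset_iff_ceilSet_le hM]

lemma ceilSet_insert_of_mem {P : Set G} {g : G} (hg : g ∈ ceilSet P) :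
    ceilSet (insert g P) = ceilSet P :=
  ceilSet_congr fun _ hM => by
    rw [Set.insert_subset_iff, and_iff_right_iff_imp]
    exact fun h => (subset_iff_ceilSet_le hM).mp h hg

lemma closure_le_ceilSet (P : Set G) : Subgroup.closure P ≤ ceilSet P :=
  (Subgroup.closure_le _).mpr (subset_ceilSet P)

lemma closure_eq_top_of_ceilSet_eq_top [IsCoatomic (Subgroup G)] {P : Set G}
    (h : ceilSet P = ⊤) : Subgroup.closure P = ⊤ := by
  refine (eq_top_or_exists_le_coatom _).resolve_right fun ⟨M, hM, hle⟩ => hM.1 ?_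
  rw [← top_le_iff, ← h, ← subset_iff_ceilSet_le hM]
  exact Subgroup.subset_closure.trans hle

lemma IsStructOption.lt {I J : Subgroup G} (h : IsStructOption I J) : I < J := by
  obtain ⟨g, hg, rfl⟩ := h
  have hsub := subset_ceilSet ((I : Set G) ∪ {g})
  exact SetLike.lt_iff_le_and_exists.mpr
    ⟨fun x hx => hsub (Or.inl hx), g, hsub (Or.inr rfl), hg⟩

end CeilSet

section Nim

open Classical

variable {G : Type*} [Group G] [Fintype G]

lemma gameNim_eq_mex {P : Finset G} (h : Subgroup.closure (P : Set G) ≠ ⊤) :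
    gameNim P = mex ((fun g => gameNim (insert g P)) '' (P : Set G)ᶜ) := by
  rw [gameNim, if_neg h]
  congr 1
  ext n
  simp

lemma gameNim_of_ceilSet_eq_top {P : Finset G} (h : ceilSet (P : Set G) = ⊤) :
    gameNim P = 0 := by
  rw [gameNim, if_pos (closure_eq_top_of_ceilSet_eq_top h)]

/-- The nim-values of the positions of size `≡ k (mod 2)` in the option classes of `X_I`;
`O_T` is `optionNims I 1` and `E_T` is `optionNims I 0`. -/
noncomputable def optionNims (I : Subgroup G) (k : ℕ) : Set ℕ :=
  {n | ∃ Q : Finset G, Q.card % 2 = k % 2 ∧ IsStructOption I (ceilSet (Q : Set G)) ∧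
    gameNim Q = n}

lemma optionNims_finite (I : Subgroup G) (k : ℕ) : (optionNims I k).Finite :=
  (Set.finite_range gameNim).subset fun _ ⟨Q, _, _, hQ⟩ => ⟨Q, hQ⟩

lemma optionNims_congr (I : Subgroup G) {k l : ℕ} (h : k % 2 = l % 2) :
    optionNims I k = optionNims I l := by
  simp only [optionNims, h]

/-- The nim-value of the positions of size `k` in `X_I`. -/
noncomputable def classNim (I : Subgroup G) (k : ℕ) : ℕ :=
  if k % 2 = Nat.card I % 2 then mex (optionNims I (k + 1))
  else mex (insert (mex (optionNims I k)) (optionNims I (k + 1)))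

lemma mex_insert_classNim_succ (I : Subgroup G) (k : ℕ) :
    mex (insert (classNim I (k + 1)) (optionNims I (k + 1))) = classNim I k := by
  have hk : optionNims I (k + 1 + 1) = optionNims I k := optionNims_congr I (by omega)
  by_cases h : k % 2 = Nat.card I % 2
  · rw [classNim, if_neg (by omega), hk, classNim, if_pos h]
    exact mex_insert_mex_insert_mex (optionNims_finite I _) (optionNims_finite I _)
  · rw [classNim, if_pos (by omega), hk, classNim, if_neg h]

def NimParityInvariant (J : Subgroup G) : Prop :=
  ∀ P Q : Finset G, ceilSet (P : Set G) = J → ceilSet (Q : Set G) = J →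
    P.card % 2 = Q.card % 2 → gameNim P = gameNim Q

variable {I : Subgroup G}

lemma gameNim_insert_mem_optionNims {P : Finset G} (hP : ceilSet (P : Set G) = I) {g : G}
    (hg : g ∉ I) : gameNim (insert g P) ∈ optionNims I (P.card + 1) := by
  have hgP : g ∉ P := fun h => hg (hP ▸ subset_ceilSet _ h)
  refine ⟨insert g P, by rw [Finset.card_insert_of_notMem hgP], ⟨g, hg, ?_⟩, rfl⟩
  rw [Finset.coe_insert, ← ceilSet_insert_ceilSet, hP, Set.union_singleton]

lemma optionNims_subset_image (hopt : ∀ J, IsStructOption I J → NimParityInvariant J)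
    {P : Finset G} (hP : ceilSet (P : Set G) = I) :
    optionNims I (P.card + 1) ⊆ (fun g => gameNim (insert g P)) '' (I : Set G)ᶜ := by
  rintro _ ⟨Q, hQ, hJ, rfl⟩
  obtain ⟨g, hg, hgJ⟩ := id hJ
  have hgP : g ∉ P := fun h => hg (hP ▸ subset_ceilSet _ h)
  refine ⟨g, hg, hopt _ hJ _ _ ?_ rfl ?_⟩
  · rw [← hgJ, Finset.coe_insert, ← ceilSet_insert_ceilSet, hP, Set.union_singleton]
  · rw [Finset.card_insert_of_notMem hgP, hQ]

lemma image_compl_eq_optionNims (hopt : ∀ J, IsStructOption I J → NimParityInvariant J)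
    {P : Finset G} (hP : ceilSet (P : Set G) = I) :
    (fun g => gameNim (insert g P)) '' (I : Set G)ᶜ = optionNims I (P.card + 1) :=
  Set.Subset.antisymm (Set.image_subset_iff.mpr fun _ hg => gameNim_insert_mem_optionNims hP hg)
    (optionNims_subset_image hopt hP)

lemma gameNim_eq_classNim (hItop : I ≠ ⊤)
    (hopt : ∀ J, IsStructOption I J → NimParityInvariant J) (P : Finset G)
    (hP : ceilSet (P : Set G) = I) : gameNim P = classNim I P.card := by
  induction P using WellFoundedGT.induction with
  | _ P ih =>
  have hPI : (P : Set G) ⊆ I := hP ▸ subset_ceilSet _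
  have hcl : Subgroup.closure (P : Set G) ≠ ⊤ := fun h =>
    hItop (top_le_iff.mp (h ▸ hP ▸ closure_le_ceilSet _))
  have hmoves : (P : Set G)ᶜ = ((I : Set G) \ P) ∪ (I : Set G)ᶜ := by
    ext x
    have := @hPI x
    simp only [Set.mem_compl_iff, Set.mem_union, Set.mem_sdiff]
    tauto
  have hinside : ∀ g ∈ (I : Set G) \ P, gameNim (insert g P) = classNim I (P.card + 1) := by
    rintro g ⟨hgI, hgP⟩
    rw [ih _ (Finset.ssubset_insert hgP) (by
      rw [Finset.coe_insert, ceilSet_insert_of_mem (hP ▸ hgI), hP]),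
      Finset.card_insert_of_notMem hgP]
  rw [gameNim_eq_mex hcl, hmoves, Set.image_union, image_compl_eq_optionNims hopt hP]
  rcases ((I : Set G) \ P).eq_empty_or_nonempty with hfull | hne
  · have hcard : P.card = Nat.card I := by
      rw [← Set.ncard_coe_finset, Set.sdiff_eq_empty.mp hfull |>.antisymm' hPI]
      exact (Nat.card_coe_set_eq (I : Set G)).symm
    rw [hfull, Set.image_empty, Set.empty_union, classNim, if_pos (by rw [hcard])]
  · rw [Set.image_congr hinside, hne.image_const, Set.singleton_union,
      mex_insert_classNim_succ]

lemma classNim_congr (I : Subgroup G) {k l : ℕ} (h : k % 2 = l % 2) :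
    classNim I k = classNim I l := by
  simp only [classNim, h, optionNims_congr I (show (k + 1) % 2 = (l + 1) % 2 by omega),
    optionNims_congr I h]

lemma nimParityInvariant (J : Subgroup G) : NimParityInvariant J := by
  induction J using WellFoundedGT.induction with
  | _ J ih =>
  intro P Q hP hQ hPQ
  by_cases hJ : J = ⊤
  · rw [gameNim_of_ceilSet_eq_top (hP.trans hJ), gameNim_of_ceilSet_eq_top (hQ.trans hJ)]
  · have hopt : ∀ K, IsStructOption J K → NimParityInvariant K := fun K hK => ih K hK.lt
    rw [gameNim_eq_classNim hJ hopt P hP, gameNim_eq_classNim hJ hopt Q hQ,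
      classNim_congr J hPQ]

end Nim

theorem type_calculus_general {G : Type*} [Group G] [Fintype G]
    (I : Subgroup G) (hItop : I ≠ ⊤)
    (O_T E_T : Set ℕ)
    (hOT : O_T = {n : ℕ | ∃ Q : Finset G,
      Odd Q.card ∧ IsStructOption I (ceilSet (Q : Set G)) ∧ gameNim Q = n})
    (hET : E_T = {n : ℕ | ∃ Q : Finset G,
      Even Q.card ∧ IsStructOption I (ceilSet (Q : Set G)) ∧ gameNim Q = n}) :
    (Even (Nat.card I) →
      (∀ P : Finset G, ceilSet (P : Set G) = I → Even P.card →
        gameNim P = mex O_T) ∧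
      (∀ P : Finset G, ceilSet (P : Set G) = I → Odd P.card →
        gameNim P = mex (E_T ∪ {mex O_T}))) ∧
    (Odd (Nat.card I) →
      (∀ P : Finset G, ceilSet (P : Set G) = I → Odd P.card →
        gameNim P = mex E_T) ∧
      (∀ P : Finset G, ceilSet (P : Set G) = I → Even P.card →
        gameNim P = mex (O_T ∪ {mex E_T}))) := by
  have hO : ∀ k, k % 2 = 1 → optionNims I k = O_T := fun k hk => by
    simp only [hOT, optionNims, hk, Nat.odd_iff]
  have hE : ∀ k, k % 2 = 0 → optionNims I k = E_T := fun k hk => by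
    simp only [hET, optionNims, hk, Nat.even_iff]
  have key : ∀ P : Finset G, ceilSet (P : Set G) = I → gameNim P = classNim I P.card :=
    gameNim_eq_classNim hItop fun J _ => nimParityInvariant J
  simp only [Nat.even_iff, Nat.odd_iff]
  refine ⟨fun hI => ⟨fun P hP hPc => ?_, fun P hP hPc => ?_⟩,
    fun hI => ⟨fun P hP hPc => ?_, fun P hP hPc => ?_⟩⟩ <;>
  · rw [key P hP, classNim]
    simp only [hI, hPc, hO, hE, Set.union_singleton, Nat.succ_mod_two_eq_zero_iff,
      Nat.succ_mod_two_eq_one_iff, zero_ne_one, one_ne_zero, if_true, if_false]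

/-- Type calculus for GEN(G): the nim-values of positions in a structure class
`X_I` (with `I ≠ G`) are computed by the mex rule from the nim-values of the
positions in the option structure classes, according to parities. -/
theorem type_calculus {G : Type*} [Group G] [Fintype G]
    (I : Subgroup G) (hI : ceilSet (I : Set G) = I) (hItop : I ≠ ⊤)
    (O_T E_T : Set ℕ)
    (hOT : O_T = {n : ℕ | ∃ Q : Finset G,
      Odd Q.card ∧ IsStructOption I (ceilSet (Q : Set G)) ∧ gameNim Q = n})
    (hET : E_T = {n : ℕ | ∃ Q : Finset G,
      Even Q.card ∧ IsStructOption I (ceilSet (Q : Set G)) ∧ gameNim Q = n}) :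
    (Even (Nat.card I) →
      (∀ P : Finset G, ceilSet (P : Set G) = I → Even P.card →
        gameNim P = mex O_T) ∧
      (∀ P : Finset G, ceilSet (P : Set G) = I → Odd P.card →
        gameNim P = mex (E_T ∪ {mex O_T}))) ∧
    (Odd (Nat.card I) →
      (∀ P : Finset G, ceilSet (P : Set G) = I → Odd P.card →
        gameNim P = mex E_T) ∧
      (∀ P : Finset G, ceilSet (P : Set G) = I → Even P.card →
        gameNim P = mex (O_T ∪ {mex E_T}))) :=
  type_calculus_general I hItop O_T E_T hOT hET
end

section
/- Let G be a finite group and let P be a subset of G. Then δ_G(P) = δ_G(⌈P⌉); that is, a position and the intersection of the maximal subgroups containing it have equal deficiency. -/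
/-! If `a ⊔ b = ⊤`, then `b` lies in no coatom above `a`, so `b` also supplements the meet of
those coatoms: the relative form of the fact that the Frattini subgroup consists of
non-generators. Applied to the subgroup lattice with `a = ⟨P⟩` and `b = ⟨Q⟩`, this says `P ∪ Q`
generates `G` exactly when `⌈P⌉ ∪ Q` does, so both deficiencies minimise over the same sets. -/

theorem sInf_coatoms_above_sup_eq_top_iff {α : Type*} [CompleteLattice α] [IsCoatomic α]
    (a b : α) : sInf {m | IsCoatom m ∧ a ≤ m} ⊔ b = ⊤ ↔ a ⊔ b = ⊤ := by
  constructor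
  · intro h
    by_contra hne
    obtain ⟨m, hm, hle⟩ := (eq_top_or_exists_le_coatom (a ⊔ b)).resolve_left hne
    have hinf : sInf {m | IsCoatom m ∧ a ≤ m} ≤ m := sInf_le ⟨hm, le_sup_left.trans hle⟩
    exact hm.1 (top_le_iff.mp (h ▸ sup_le hinf (le_sup_right.trans hle)))
  · intro h
    exact top_le_iff.mp (h ▸ sup_le_sup_right (le_sInf fun _ hm => hm.2) b)

theorem ceilSet_eq_sInf_coatoms_above_closure {G : Type*} [Group G] (P : Set G) :
    ceilSet P = sInf {M | IsCoatom M ∧ Subgroup.closure P ≤ M} := by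
  simp only [ceilSet, Subgroup.closure_le]

theorem closure_ceilSet_union_eq_top_iff {G : Type*} [Group G] [IsCoatomic (Subgroup G)]
    (P S : Set G) :
    Subgroup.closure ((ceilSet P : Set G) ∪ S) = ⊤ ↔ Subgroup.closure (P ∪ S) = ⊤ := by
  rw [Subgroup.closure_union, Subgroup.closure_union, Subgroup.closure_eq,
    ceilSet_eq_sInf_coatoms_above_closure, sInf_coatoms_above_sup_eq_top_iff]

theorem deficiency_congr {G : Type*} [Group G] [Fintype G] {S T : Set G}
    (h : ∀ Q : Finset G,
      Subgroup.closure (S ∪ (Q : Set G)) = ⊤ ↔ Subgroup.closure (T ∪ (Q : Set G)) = ⊤) :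
    deficiency S = deficiency T := by
  simp only [deficiency, h]

/-- A position and the intersection of the maximal subgroups containing it
have equal deficiency. -/
theorem deficiency_ceil {G : Type*} [Group G] [Fintype G] (P : Set G) :
    deficiency P = deficiency ((ceilSet P : Subgroup G) : Set G) :=
  deficiency_congr fun Q => (closure_ceilSet_union_eq_top_iff P Q).symm
end

section
/- Let G be a finite group and let I and J be structure subgroups of odd order with δ_G(I) = δ_G(J) = n, such that X_J is an option of X_I. If X_J has an option X_L with |L| even and δ_G(L) = n, then X_I has an option X_K with |K| even and δ_G(K) = n. (In the paper's terminology: if X_J is smooth, then so is X_I.) -/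
/-
An option `X_L` of `X_J` satisfies `I ≤ J ≤ L`, and an even `L` contains an involution `t`,
which cannot lie in the odd `I`. Then `K = ⌈I ∪ {t}⌉` is an even option of `X_I` with
`I ≤ K ≤ L`, and since deficiency is antitone, `n = δ(L) ≤ δ(K) ≤ δ(I) = n`.
-/

section

variable {G : Type*} [Group G]

lemma ceilSet_mono {P Q : Set G} (h : P ⊆ Q) : ceilSet P ≤ ceilSet Q :=
  sInf_le_sInf fun _ hM => ⟨hM.1, h.trans hM.2⟩

lemma ceilSet_ceilSet (P : Set G) : ceilSet (ceilSet P : Set G) = ceilSet P :=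
  le_antisymm (sInf_le_sInf fun _ hM => ⟨hM.1, SetLike.coe_subset_coe.mpr (sInf_le hM)⟩)
    (ceilSet_mono (subset_ceilSet P))

lemma IsStructOption.le {I J : Subgroup G} (h : IsStructOption I J) : I ≤ J := by
  obtain ⟨g, -, rfl⟩ := h
  exact fun x hx => subset_ceilSet _ (Set.mem_union_left _ hx)

lemma IsStructOption.ceilSet_eq {I J : Subgroup G} (h : IsStructOption I J) :
    ceilSet (J : Set G) = J := by
  obtain ⟨g, -, rfl⟩ := h
  exact ceilSet_ceilSet _

lemma even_natCard_of_orderOf_eq_two {H : Subgroup G} {x : G} (hx : x ∈ H)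
    (h : orderOf x = 2) : Even (Nat.card H) :=
  even_iff_two_dvd.mpr (h ▸ H.orderOf_dvd_natCard hx)

lemma exists_even_isStructOption_le [Finite G] {I L : Subgroup G} (hI : Odd (Nat.card I))
    (hIL : I ≤ L) (hL : ceilSet (L : Set G) = L) (hLeven : Even (Nat.card L)) :
    ∃ K : Subgroup G, IsStructOption I K ∧ Even (Nat.card K) ∧ K ≤ L := by
  have : Fact (Nat.Prime 2) := ⟨Nat.prime_two⟩
  obtain ⟨t, ht⟩ := exists_prime_orderOf_dvd_card' (G := L) 2 hLeven.two_dvd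
  rw [← Subgroup.orderOf_coe] at ht
  have htI : (t : G) ∉ I := fun htI =>
    Nat.not_even_iff_odd.mpr hI (even_natCard_of_orderOf_eq_two htI ht)
  refine ⟨ceilSet ((I : Set G) ∪ {(t : G)}), ⟨t, htI, rfl⟩, ?_, ?_⟩
  · exact even_natCard_of_orderOf_eq_two (subset_ceilSet _ (Set.mem_union_right _ rfl)) ht
  · exact (ceilSet_mono (Set.union_subset hIL (Set.singleton_subset_iff.mpr t.2))).trans hL.le

lemma deficiency_anti [Fintype G] {S T : Set G} (h : S ⊆ T) : deficiency T ≤ deficiency S := by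
  obtain ⟨Q, hQ, hgen⟩ := Nat.sInf_mem (s := {n : ℕ | ∃ Q : Finset G, Q.card = n ∧
    Subgroup.closure (S ∪ (Q : Set G)) = ⊤}) ⟨_, Finset.univ, rfl, by simp⟩
  refine Nat.sInf_le ⟨Q, hQ, top_unique ?_⟩
  exact hgen ▸ Subgroup.closure_mono (Set.union_subset_union_left _ h)

end

theorem smooth_of_smooth_option_general {G : Type*} [Group G] [Fintype G]
    (I J : Subgroup G)
    (hIodd : Odd (Nat.card I))
    (n : ℕ) (hIdef : deficiency (I : Set G) = n)
    (hopt : IsStructOption I J)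
    (hsmooth : ∃ L : Subgroup G, IsStructOption J L ∧ Even (Nat.card L) ∧
      deficiency (L : Set G) = n) :
    ∃ K : Subgroup G, IsStructOption I K ∧ Even (Nat.card K) ∧
      deficiency (K : Set G) = n := by
  obtain ⟨L, hJL, hLeven, hLdef⟩ := hsmooth
  obtain ⟨K, hIK, hKeven, hKL⟩ :=
    exists_even_isStructOption_le hIodd (hopt.le.trans hJL.le) hJL.ceilSet_eq hLeven
  refine ⟨K, hIK, hKeven, le_antisymm ?_ ?_⟩
  · exact hIdef ▸ deficiency_anti hIK.le
  · exact hLdef ▸ deficiency_anti hKL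

/-- If `X_I, X_J` are odd structure classes of the same deficiency `n`, `X_J`
is an option of `X_I`, and `X_J` is smooth (has an even option of deficiency
`n`), then `X_I` is smooth as well. -/
theorem smooth_of_smooth_option {G : Type*} [Group G] [Fintype G]
    (I J : Subgroup G) (hI : ceilSet (I : Set G) = I) (hJ : ceilSet (J : Set G) = J)
    (hIodd : Odd (Nat.card I)) (hJodd : Odd (Nat.card J))
    (n : ℕ) (hIdef : deficiency (I : Set G) = n) (hJdef : deficiency (J : Set G) = n)
    (hopt : IsStructOption I J)
    (hsmooth : ∃ L : Subgroup G, IsStructOption J L ∧ Even (Nat.card L) ∧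
      deficiency (L : Set G) = n) :
    ∃ K : Subgroup G, IsStructOption I K ∧ Even (Nat.card K) ∧
      deficiency (K : Set G) = n :=
  smooth_of_smooth_option_general I J hIodd n hIdef hopt hsmooth
end
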